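/- arXiv:2503.04101 — 5 statements merged into one kernel-verified Lean document; each statement's English description precedes it below -/
import Mathlib

section
/- Let G be a 2k×2k positive semidefinite real symmetric matrix with trace 2k. If λ_min denotes its smallest eigenvalue, then det(G) ≤ e · λ_min. -/
/-! Write `det G` as the product of the eigenvalues and split off any one of them, `λ`. By AM-GM
the other `2k - 1` eigenvalues, whose sum is at most `tr G = 2k`, have product at most
`(2k / (2k - 1)) ^ (2k - 1) = (1 + 1 / (2k - 1)) ^ (2k - 1) ≤ e`; so `det G ≤ e λ` for every
eigenvalue, in particular the smallest. -/

open Finset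

theorem Real.prod_le_sum_div_card_pow {ι : Type*} (s : Finset ι) (z : ι → ℝ)
    (hz : ∀ i ∈ s, 0 ≤ z i) : ∏ i ∈ s, z i ≤ ((∑ i ∈ s, z i) / #s) ^ #s := by
  rcases s.eq_empty_or_nonempty with rfl | hs
  · simp
  have hcard : (0 : ℝ) < #s := by exact_mod_cast hs.card_pos
  have hprod : 0 ≤ ∏ i ∈ s, z i := prod_nonneg hz
  have amgm := Real.geom_mean_le_arith_mean s (fun _ ↦ 1) z (fun _ _ ↦ zero_le_one)
    (by simpa using hcard) hz
  simp only [Real.rpow_one, one_mul, sum_const, nsmul_eq_mul, mul_one] at amgm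
  calc ∏ i ∈ s, z i = ((∏ i ∈ s, z i) ^ (#s : ℝ)⁻¹) ^ #s := by
        rw [← Real.rpow_natCast, ← Real.rpow_mul hprod, inv_mul_cancel₀ hcard.ne',
          Real.rpow_one]
    _ ≤ ((∑ i ∈ s, z i) / #s) ^ #s := by gcongr

theorem Real.natCast_succ_div_pow_le_exp_one (m : ℕ) :
    (((m + 1 : ℕ) : ℝ) / m) ^ m ≤ Real.exp 1 := by
  rcases eq_or_ne m 0 with rfl | hm
  · simp [Real.one_le_exp zero_le_one]
  have hsucc : ((m + 1 : ℕ) : ℝ) / m = 1 + (m : ℝ)⁻¹ := by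
    push_cast
    field_simp
  rw [hsucc]
  exact Real.one_add_inv_pow_le_exp

theorem Matrix.PosSemidef.det_le_eigenvalues_mul {n : Type*} [Fintype n] [DecidableEq n]
    {A : Matrix n n ℝ} (hA : A.PosSemidef) (i : n) :
    A.det ≤ hA.isHermitian.eigenvalues i *
      (A.trace / (Fintype.card n - 1 : ℕ)) ^ (Fintype.card n - 1) := by
  set ev := hA.isHermitian.eigenvalues
  have hev : ∀ j, 0 ≤ ev j := hA.eigenvalues_nonneg
  have hcard : #(univ.erase i) = Fintype.card n - 1 := by
    rw [card_erase_of_mem (mem_univ i), card_univ]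
  have hsum : ∑ j ∈ univ.erase i, ev j ≤ A.trace := by
    rw [hA.isHermitian.trace_eq_sum_eigenvalues]
    exact sum_le_univ_sum_of_nonneg hev
  calc A.det = ev i * ∏ j ∈ univ.erase i, ev j := by
        rw [hA.isHermitian.det_eq_prod_eigenvalues, mul_prod_erase univ _ (mem_univ i)]
        rfl
    _ ≤ ev i * ((∑ j ∈ univ.erase i, ev j) / #(univ.erase i)) ^ #(univ.erase i) := by
        gcongr
        · exact hev i
        · exact Real.prod_le_sum_div_card_pow _ _ fun j _ ↦ hev j
    _ ≤ ev i * (A.trace / (Fintype.card n - 1 : ℕ)) ^ (Fintype.card n - 1) := by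
        rw [hcard]
        gcongr
        · exact hev i
        · exact div_nonneg (sum_nonneg fun j _ ↦ hev j) (Nat.cast_nonneg _)

theorem stmt_0 (k : ℕ) (hk : 0 < k)
    (G : Matrix (Fin (2 * k)) (Fin (2 * k)) ℝ)
    (hG : G.PosSemidef) (htr : G.trace = 2 * k) :
    G.det ≤ Real.exp 1 * ⨅ i, hG.isHermitian.eigenvalues i := by
  have : Nonempty (Fin (2 * k)) := ⟨⟨0, by omega⟩⟩
  obtain ⟨i, hi⟩ := exists_eq_ciInf_of_finite (f := hG.isHermitian.eigenvalues)
  have htr' : G.trace = ((2 * k - 1 + 1 : ℕ) : ℝ) := by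
    rw [htr, Nat.sub_add_cancel (by omega)]
    push_cast
    ring
  rw [← hi, mul_comm (Real.exp 1)]
  calc G.det ≤ hG.isHermitian.eigenvalues i * (G.trace / (2 * k - 1 : ℕ)) ^ (2 * k - 1) := by
        simpa using hG.det_le_eigenvalues_mul i
    _ ≤ hG.isHermitian.eigenvalues i * Real.exp 1 := by
        rw [htr']
        gcongr
        · exact hG.eigenvalues_nonneg i
        · exact Real.natCast_succ_div_pow_le_exp_one _
end

section
/- Let s_1,…,s_k be linearly independent unit vectors in ℂ^d such that every nonzero vector in the ℤ[i]-lattice they generate has Euclidean norm at least 1. If φ is a unit vector with φ = Σ_{j=1}^k c_j s_j for c ∈ ℂ^k, then ‖c‖₁ ≤ √e · (2k)^{(2k+1)/2}. -/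
/-!
Realify: the `2k` vectors `s_j, i • s_j` are `ℝ`-linearly independent and their `ℤ`-span is the
`ℤ[i]`-lattice, so their real Gram matrix `G` is positive definite, has trace `2k`, and its
quadratic form is at least `1` on nonzero integer vectors. Minkowski's convex body theorem applied
to the ellipsoid `{y | yᵀ G y < 1}` of volume `π^k / (k! √det G)` gives
`det G ≥ (π^k / (4^k k!))²`. Since the eigenvalues of `G` sum to `2k`, the bound `x ≤ e^(x-1)`
gives `det G ≤ e λ` for every eigenvalue `λ`. Writing `φ = ∑ y_p b_p` with `y` the real and
imaginary parts of `c`, we get `‖c‖₂² = ‖y‖² ≤ 1 / λ_min ≤ e / det G`, and Cauchy–Schwarz turns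
this into the bound on `‖c‖₁`.
-/

open Matrix Finset MeasureTheory Metric
open scoped MatrixOrder

namespace Matrix

variable {ι : Type*} [Fintype ι]

section Gram

variable {F : Type*} [NormedAddCommGroup F] [InnerProductSpace ℝ F]

theorem dotProduct_gram_mulVec (b : ι → F) (y : ι → ℝ) :
    y ⬝ᵥ gram ℝ b *ᵥ y = ‖∑ i, y i • b i‖ ^ 2 := by
  simpa [real_inner_self_eq_norm_sq] using star_dotProduct_gram_mulVec (𝕜 := ℝ) b y y

theorem trace_gram (b : ι → F) : (gram ℝ b).trace = ∑ i, ‖b i‖ ^ 2 := by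
  simp [trace, gram_apply]

end Gram

variable [DecidableEq ι] {M : Matrix ι ι ℝ}

theorem IsHermitian.mul_dotProduct_self_le (hM : M.IsHermitian) {c : ℝ}
    (hc : ∀ i, c ≤ hM.eigenvalues i) (y : ι → ℝ) : c * (y ⬝ᵥ y) ≤ y ⬝ᵥ M *ᵥ y := by
  have hle : algebraMap ℝ (Matrix ι ι ℝ) c ≤ M := by
    rw [algebraMap_le_iff_le_spectrum hM.isSelfAdjoint, hM.spectrum_real_eq_range_eigenvalues]
    rintro _ ⟨i, rfl⟩
    exact hc i
  simpa [sub_mulVec, Algebra.algebraMap_eq_smul_one, smul_mulVec, dotProduct_smul] using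
    (le_iff.mp hle).dotProduct_mulVec_nonneg y

theorem PosDef.det_le_exp_one_mul_eigenvalues (hM : M.PosDef)
    (htr : M.trace = Fintype.card ι) (i : ι) :
    M.det ≤ Real.exp 1 * hM.isHermitian.eigenvalues i := by
  set μ := hM.isHermitian.eigenvalues
  have hμ : ∀ j, 0 < μ j := hM.eigenvalues_pos
  have hsum : ∑ j ∈ univ.erase i, (μ j - 1) = 1 - μ i := by
    have htrμ : ∑ j, μ j = Fintype.card ι := by
      rw [← htr, hM.isHermitian.trace_eq_sum_eigenvalues]; rfl
    rw [sum_sub_distrib, sum_erase_eq_sub (mem_univ i), sum_erase_eq_sub (mem_univ i), htrμ]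
    simp
  -- `x ≤ exp (x - 1)` for the other eigenvalues, whose sum is `card ι - μ i`
  have hrest : ∏ j ∈ univ.erase i, μ j ≤ Real.exp (1 - μ i) := by
    rw [← hsum, Real.exp_sum]
    refine prod_le_prod (fun j _ => (hμ j).le) fun j _ => ?_
    linarith [Real.add_one_le_exp (μ j - 1)]
  calc M.det = μ i * ∏ j ∈ univ.erase i, μ j := by
        rw [hM.isHermitian.det_eq_prod_eigenvalues, ← mul_prod_erase _ _ (mem_univ i)]; rfl
    _ ≤ μ i * Real.exp (1 - μ i) := mul_le_mul_of_nonneg_left hrest (hμ i).le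
    _ ≤ μ i * Real.exp 1 :=
        mul_le_mul_of_nonneg_left (Real.exp_le_exp.mpr (by linarith [hμ i])) (hμ i).le
    _ = Real.exp 1 * μ i := mul_comm _ _

theorem PosDef.det_mul_dotProduct_self_le (hM : M.PosDef)
    (htr : M.trace = Fintype.card ι) (y : ι → ℝ) :
    M.det * (y ⬝ᵥ y) ≤ Real.exp 1 * (y ⬝ᵥ M *ᵥ y) := by
  have he := Real.exp_pos 1
  have := hM.isHermitian.mul_dotProduct_self_le
    (fun i => (div_le_iff₀' he).mpr (hM.det_le_exp_one_mul_eigenvalues htr i)) y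
  rwa [div_mul_eq_mul_div, div_le_iff₀' he] at this

theorem PosSemidef.dotProduct_mulVec_eq_sqrt (hM : M.PosSemidef) (y : ι → ℝ) :
    y ⬝ᵥ M *ᵥ y = (CFC.sqrt M *ᵥ y) ⬝ᵥ (CFC.sqrt M *ᵥ y) := by
  have hA : (CFC.sqrt M)ᵀ = CFC.sqrt M := by
    simpa using (CFC.sqrt_nonneg M).posSemidef.isHermitian.eq
  conv_lhs => rw [← CFC.sqrt_mul_sqrt_self M hM.nonneg]
  rw [← mulVec_mulVec, dotProduct_mulVec, ← mulVec_transpose, hA]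

theorem PosDef.volume_setOf_dotProduct_mulVec_lt_one (hM : M.PosDef) :
    volume {y : ι → ℝ | y ⬝ᵥ M *ᵥ y < 1} =
      ENNReal.ofReal (√M.det)⁻¹ * volume (ball (0 : EuclideanSpace ℝ ι) 1) := by
  set A := CFC.sqrt M
  have hdet : |A.det| = √M.det := by
    rw [← Real.sqrt_sq_eq_abs, sq, ← det_mul, CFC.sqrt_mul_sqrt_self M hM.posSemidef.nonneg]
  have hset : {y : ι → ℝ | y ⬝ᵥ M *ᵥ y < 1} =
      toLin' A ⁻¹' (WithLp.toLp 2 ⁻¹' ball (0 : EuclideanSpace ℝ ι) 1) := by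
    ext y
    simp only [Set.mem_ofPred_eq, Set.mem_preimage, mem_ball_zero_iff, toLin'_apply,
      hM.posSemidef.dotProduct_mulVec_eq_sqrt]
    rw [← sq_lt_one_iff₀ (norm_nonneg _), EuclideanSpace.norm_sq_eq]
    simp [dotProduct, sq, A]
  have hdet0 : LinearMap.det (toLin' A) ≠ 0 := by
    rw [LinearMap.det_toLin', ← abs_ne_zero, hdet]
    exact (Real.sqrt_pos.mpr hM.det_pos).ne'
  rw [hset, Measure.addHaar_preimage_linearMap volume hdet0, LinearMap.det_toLin', abs_inv, hdet,
    (PiLp.volume_preserving_toLp ι).measure_preimage measurableSet_ball.nullMeasurableSet]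

end Matrix

section Lattice

variable {ι : Type*} [Fintype ι]

theorem volume_preimage_ball_le_two_pow {F : Type*} [SeminormedAddCommGroup F] [NormedSpace ℝ F]
    (T : (ι → ℝ) →ₗ[ℝ] F) (hT : ∀ x : ι → ℤ, x ≠ 0 → 1 ≤ ‖T (Int.cast ∘ x)‖) :
    volume (T ⁻¹' ball 0 1) ≤ 2 ^ Fintype.card ι := by
  classical
  by_contra! hlt
  let e := Pi.basisFun ℝ ι
  have : Countable (Submodule.span ℤ (Set.range e)).toAddSubgroup :=
    inferInstanceAs (Countable (Submodule.span ℤ (Set.range e)))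
  have hvol : volume (ZSpan.fundamentalDomain e) = 1 := by
    have : of e = 1 := by ext i j; simp [e, one_apply, Pi.single_apply, eq_comm]
    simp [ZSpan.volume_fundamentalDomain, this]
  obtain ⟨⟨y, hyL⟩, hy0, hyT⟩ := exists_ne_zero_mem_lattice_of_measure_mul_two_pow_lt_measure
    (ZSpan.isAddFundamentalDomain' e volume) (fun y hy => by simpa using hy)
    ((convex_ball 0 1).linear_preimage T) (by simpa [hvol] using hlt)
  choose x hx using (e.mem_span_iff_repr_mem ℤ y).mp hyL
  obtain rfl : Int.cast ∘ x = y := funext fun i => by simpa [e] using hx i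
  have hx0 : x ≠ 0 := by
    rintro rfl
    exact hy0 (by ext i; simp)
  exact (hT x hx0).not_gt (by simpa using hyT)

theorem sum_smul_smul_eq_sum_sum_smul {κ R S M : Type*} [Fintype κ] [Semiring R]
    [Semiring S] [AddCommMonoid M] [Module R S] [Module S M] [Module R M] [IsScalarTower R S M]
    (y : κ × ι → R) (e : κ → S) (s : ι → M) :
    ∑ p, y p • e p.1 • s p.2 = ∑ j, (∑ i, y (i, j) • e i) • s j := by
  rw [Fintype.sum_prod_type, Finset.sum_comm]
  simp [Finset.sum_smul, smul_assoc]

theorem one_le_norm_sum_intCast_smul_basisOneI_smul {E : Type*} [NormedAddCommGroup E]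
    [NormedSpace ℂ E] {s : ι → E}
    (hb : LinearIndependent ℝ fun p : Fin 2 × ι => Complex.basisOneI p.1 • s p.2)
    (hmin : ∀ a : ι → GaussianInt, (∑ j, (GaussianInt.toComplex (a j)) • s j) ≠ 0 →
      1 ≤ ‖∑ j, (GaussianInt.toComplex (a j)) • s j‖)
    (x : Fin 2 × ι → ℤ) (hx : x ≠ 0) :
    1 ≤ ‖∑ p, (x p : ℝ) • Complex.basisOneI p.1 • s p.2‖ := by
  have hgauss : ∑ p, (x p : ℝ) • Complex.basisOneI p.1 • s p.2 =
      ∑ j, GaussianInt.toComplex ⟨x (0, j), x (1, j)⟩ • s j := by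
    rw [sum_smul_smul_eq_sum_sum_smul]
    simp [Fin.sum_univ_two, GaussianInt.toComplex_def]
  have hne : ∑ p, (x p : ℝ) • Complex.basisOneI p.1 • s p.2 ≠ 0 := fun h =>
    hx (funext fun p => by exact_mod_cast Fintype.linearIndependent_iff.mp hb _ h p)
  rw [hgauss] at hne ⊢
  exact hmin _ hne

variable [DecidableEq ι] {F : Type*} [NormedAddCommGroup F] [InnerProductSpace ℝ F]

theorem volume_ball_le_two_pow_mul_sqrt_det_gram {b : ι → F} (hb : LinearIndependent ℝ b)
    (hmin : ∀ x : ι → ℤ, x ≠ 0 → 1 ≤ ‖∑ i, (x i : ℝ) • b i‖) :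
    volume (ball (0 : EuclideanSpace ℝ ι) 1) ≤
      2 ^ Fintype.card ι * ENNReal.ofReal √(gram ℝ b).det := by
  have hG := posDef_gram_of_linearIndependent hb
  have hdet : 0 < √(gram ℝ b).det := Real.sqrt_pos.mpr hG.det_pos
  have hset : {y : ι → ℝ | y ⬝ᵥ gram ℝ b *ᵥ y < 1} =
      Fintype.linearCombination ℝ b ⁻¹' ball 0 1 := by
    ext y
    simp [dotProduct_gram_mulVec, Fintype.linearCombination_apply]
  have hmink := volume_preimage_ball_le_two_pow (Fintype.linearCombination ℝ b)
    (by simpa [Fintype.linearCombination_apply] using hmin)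
  rw [← hset, hG.volume_setOf_dotProduct_mulVec_lt_one] at hmink
  calc volume (ball (0 : EuclideanSpace ℝ ι) 1)
      = ENNReal.ofReal √(gram ℝ b).det * ENNReal.ofReal (√(gram ℝ b).det)⁻¹ *
          volume (ball (0 : EuclideanSpace ℝ ι) 1) := by
        rw [← ENNReal.ofReal_mul hdet.le, mul_inv_cancel₀ hdet.ne', ENNReal.ofReal_one, one_mul]
    _ ≤ ENNReal.ofReal √(gram ℝ b).det * 2 ^ Fintype.card ι := by rw [mul_assoc]; gcongr
    _ = 2 ^ Fintype.card ι * ENNReal.ofReal √(gram ℝ b).det := mul_comm _ _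

theorem sq_pi_pow_div_le_det_gram [Nonempty ι] {k : ℕ} (hk : Fintype.card ι = 2 * k)
    {b : ι → F} (hb : LinearIndependent ℝ b)
    (hmin : ∀ x : ι → ℤ, x ≠ 0 → 1 ≤ ‖∑ i, (x i : ℝ) • b i‖) :
    (Real.pi ^ k / (4 ^ k * k.factorial)) ^ 2 ≤ (gram ℝ b).det := by
  have hvol := volume_ball_le_two_pow_mul_sqrt_det_gram hb hmin
  rw [InnerProductSpace.volume_ball_of_dim_even (k := k) (by simpa using hk), ENNReal.ofReal_one,
    one_pow, one_mul, hk, pow_mul, show (2 : ENNReal) ^ 2 = ENNReal.ofReal 4 by norm_num,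
    ← ENNReal.ofReal_pow (by norm_num), ← ENNReal.ofReal_mul (by positivity),
    ENNReal.ofReal_le_ofReal_iff (by positivity)] at hvol
  rw [← Real.le_sqrt (by positivity) (posDef_gram_of_linearIndependent hb).det_pos.le,
    div_le_iff₀ (by positivity)]
  calc Real.pi ^ k = Real.pi ^ k / k.factorial * k.factorial := by field_simp
    _ ≤ √(gram ℝ b).det * (4 ^ k * k.factorial) := by nlinarith [hvol]

theorem sq_pi_pow_div_mul_dotProduct_self_le [Nonempty ι] {k : ℕ}
    (hk : Fintype.card ι = 2 * k) {b : ι → F} (hb : LinearIndependent ℝ b)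
    (hunit : ∀ i, ‖b i‖ = 1) (hmin : ∀ x : ι → ℤ, x ≠ 0 → 1 ≤ ‖∑ i, (x i : ℝ) • b i‖)
    (y : ι → ℝ) :
    (Real.pi ^ k / (4 ^ k * k.factorial)) ^ 2 * (y ⬝ᵥ y) ≤
      Real.exp 1 * ‖∑ i, y i • b i‖ ^ 2 := by
  have htr : (gram ℝ b).trace = Fintype.card ι := by simp [trace_gram, hunit]
  have hy : 0 ≤ y ⬝ᵥ y := by simpa using dotProduct_self_star_nonneg y
  calc (Real.pi ^ k / (4 ^ k * k.factorial)) ^ 2 * (y ⬝ᵥ y) ≤ (gram ℝ b).det * (y ⬝ᵥ y) :=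
        mul_le_mul_of_nonneg_right (sq_pi_pow_div_le_det_gram hk hb hmin) hy
    _ ≤ Real.exp 1 * (y ⬝ᵥ gram ℝ b *ᵥ y) :=
        (posDef_gram_of_linearIndependent hb).det_mul_dotProduct_self_le htr y
    _ = Real.exp 1 * ‖∑ i, y i • b i‖ ^ 2 := by rw [dotProduct_gram_mulVec]

end Lattice

theorem natCast_le_mul_sq_pi_pow_div (k : ℕ) :
    (k : ℝ) ≤ (2 * k) ^ (2 * k + 1) * (Real.pi ^ k / (4 ^ k * k.factorial)) ^ 2 := by
  have hfac : (k.factorial : ℝ) ≤ (k : ℝ) ^ k := by exact_mod_cast Nat.factorial_le_pow k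
  have hbase : (4 : ℝ) ^ k * k.factorial ≤ (2 * k) ^ k * Real.pi ^ k := by
    rw [← mul_pow]
    calc (4 : ℝ) ^ k * k.factorial ≤ 4 ^ k * k ^ k := by gcongr
      _ = (4 * k) ^ k := (mul_pow _ _ _).symm
      _ ≤ (2 * k * Real.pi) ^ k :=
        pow_le_pow_left₀ (by positivity) (by nlinarith [Real.pi_gt_three, k.cast_nonneg (α := ℝ)]) k
  rw [div_pow, ← mul_div_assoc, le_div_iff₀ (by positivity)]
  calc (k : ℝ) * (4 ^ k * k.factorial) ^ 2 ≤ (2 * k) * ((2 * k) ^ k * Real.pi ^ k) ^ 2 := by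
        gcongr
        linarith [k.cast_nonneg (α := ℝ)]
    _ = (2 * k) ^ (2 * k + 1) * (Real.pi ^ k) ^ 2 := by ring

theorem sum_le_sqrt_exp_one_mul_rpow {k : ℕ} (x : Fin k → ℝ)
    (hx : (Real.pi ^ k / (4 ^ k * k.factorial)) ^ 2 * ∑ j, x j ^ 2 ≤ Real.exp 1) :
    ∑ j, x j ≤ √(Real.exp 1) * (2 * (k : ℝ)) ^ ((2 * (k : ℝ) + 1) / 2) := by
  have hsq : (∑ j, x j) ^ 2 ≤ Real.exp 1 * (2 * k : ℝ) ^ (2 * k + 1) :=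
    calc (∑ j, x j) ^ 2 ≤ k * ∑ j, x j ^ 2 := by
          simpa using sq_sum_le_card_mul_sum_sq (s := univ) (f := x)
      _ ≤ (2 * k) ^ (2 * k + 1) * (Real.pi ^ k / (4 ^ k * k.factorial)) ^ 2 * ∑ j, x j ^ 2 :=
          mul_le_mul_of_nonneg_right (natCast_le_mul_sq_pi_pow_div k) (by positivity)
      _ ≤ (2 * k) ^ (2 * k + 1) * Real.exp 1 := by rw [mul_assoc]; gcongr
      _ = Real.exp 1 * (2 * k : ℝ) ^ (2 * k + 1) := mul_comm _ _
  calc ∑ j, x j ≤ √(Real.exp 1 * (2 * k : ℝ) ^ (2 * k + 1)) := Real.le_sqrt_of_sq_le hsq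
    _ = √(Real.exp 1) * (2 * (k : ℝ)) ^ ((2 * (k : ℝ) + 1) / 2) := by
      rw [Real.sqrt_mul (Real.exp_pos 1).le, Real.sqrt_eq_rpow (_ ^ _), ← Real.rpow_natCast,
        ← Real.rpow_mul (by positivity)]
      push_cast
      ring_nf

theorem stmt_4 (d k : ℕ) (s : Fin k → EuclideanSpace ℂ (Fin d))
    (hunit : ∀ j, ‖s j‖ = 1) (hli : LinearIndependent ℂ s)
    (hmin : ∀ a : Fin k → GaussianInt,
      (∑ j, (GaussianInt.toComplex (a j)) • s j) ≠ 0 →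
        1 ≤ ‖∑ j, (GaussianInt.toComplex (a j)) • s j‖)
    (φ : EuclideanSpace ℂ (Fin d)) (hφ : ‖φ‖ = 1)
    (c : Fin k → ℂ) (hdecomp : φ = ∑ j, c j • s j) :
    ∑ j, ‖c j‖ ≤ Real.sqrt (Real.exp 1) * (2 * (k : ℝ)) ^ ((2 * (k : ℝ) + 1) / 2) := by
  rcases k.eq_zero_or_pos with rfl | hk
  · simp
  have : Nonempty (Fin 2 × Fin k) := ⟨(0, ⟨0, hk⟩)⟩
  set b : Fin 2 × Fin k → EuclideanSpace ℂ (Fin d) := fun p => Complex.basisOneI p.1 • s p.2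
  have hb : LinearIndependent ℝ b := linearIndependent_smul Complex.basisOneI.linearIndependent hli
  have hbunit : ∀ p, ‖b p‖ = 1 := by
    simp [b, norm_smul, hunit, Complex.coe_basisOneI, Fin.forall_fin_two]
  set y : Fin 2 × Fin k → ℝ := fun p => Complex.basisOneI.repr (c p.2) p.1
  have hyφ : ∑ p, y p • b p = φ := by
    simp [y, b, sum_smul_smul_eq_sum_sum_smul, hdecomp]
  have hyy : y ⬝ᵥ y = ∑ j, ‖c j‖ ^ 2 := by
    simp [y, dotProduct, Fintype.sum_prod_type, Finset.sum_comm (γ := Fin 2), Fin.sum_univ_two,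
      Complex.coe_basisOneI_repr, Complex.sq_norm, Complex.normSq_apply]
  have hbound := sq_pi_pow_div_mul_dotProduct_self_le (k := k) (by simp [two_mul]) hb hbunit
    (one_le_norm_sum_intCast_smul_basisOneI_smul hb hmin) y
  rw [hyy, hyφ, hφ, one_pow, mul_one] at hbound
  exact sum_le_sqrt_exp_one_mul_rpow _ hbound
end

section
/- Let ψ' ∈ ℂ^{2^n} satisfy ψ' = H^{⊗n} + φ where H^{⊗n} is a fixed unit vector, ⟨H^{⊗n}, φ⟩ = 0 and ‖φ‖² = ε. Let C range uniformly over the 2^n operators that are n-fold tensor products of the single-qubit Hadamard matrix and the identity. Then the expected value of ‖(I+C)/2 · φ‖² over the random choice of C is at most ε/2; hence there exists such a C with ‖(I+C)/2 · φ‖² ≤ ε/2. -/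
noncomputable def hadMat : Bool → Matrix (Fin 2) (Fin 2) ℂ
  | false => 1
  | true => !![(Real.sqrt 2 : ℂ)⁻¹, (Real.sqrt 2 : ℂ)⁻¹;
               (Real.sqrt 2 : ℂ)⁻¹, -(Real.sqrt 2 : ℂ)⁻¹]

/-- The n-fold tensor product of Hadamard (where `b i = true`) and identity
(where `b i = false`), acting on `ℂ^{2^n}`. -/
noncomputable def hadTensor (n : ℕ) (b : Fin n → Bool)
    (ψ : EuclideanSpace ℂ (Fin n → Fin 2)) : EuclideanSpace ℂ (Fin n → Fin 2) :=
  WithLp.toLp 2 (fun x => ∑ y : Fin n → Fin 2, (∏ i, hadMat (b i) (x i) (y i)) * ψ y)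

/-- The magic state `|H⟩^{⊗n}` with `|H⟩ = cos(π/8)|0⟩ + sin(π/8)|1⟩`. -/
noncomputable def magicH (n : ℕ) : EuclideanSpace ℂ (Fin n → Fin 2) :=
  WithLp.toLp 2 (fun x => ∏ i : Fin n,
    if x i = 0 then (Real.cos (Real.pi / 8) : ℂ) else (Real.sin (Real.pi / 8) : ℂ))

/-! Each `U_b := hadTensor n b` is a tensor product of unitaries, hence unitary, so
`‖(φ + U_b φ)/2‖² = ‖φ‖²/2 + Re ⟪φ, U_b φ⟫/2`. The sum over `b` factorises over the qubits:
`∑_b U_b = (I + H)^{⊗n} = 2^n |H⟩⟨H|^{⊗n}`, since `H` is a reflection with `+1`-eigenvector `|H⟩`.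
Hence `∑_b U_b φ = 0` for `φ ⊥ |H⟩^{⊗n}`, the cross terms cancel, and the average is exactly
`‖φ‖²/2`. -/

open Matrix

namespace Matrix

variable {ι α β γ R : Type*} [Fintype ι] [CommSemiring R]

def piKronecker (M : ι → Matrix α β R) : Matrix (ι → α) (ι → β) R :=
  of fun x y => ∏ i, M i (x i) (y i)

@[simp]
lemma piKronecker_apply (M : ι → Matrix α β R) (x : ι → α) (y : ι → β) :
    piKronecker M x y = ∏ i, M i (x i) (y i) := rfl

lemma piKronecker_mul [DecidableEq ι] [Fintype β] (M : ι → Matrix α β R)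
    (N : ι → Matrix β γ R) : piKronecker M * piKronecker N = piKronecker fun i => M i * N i := by
  ext x z
  simp only [mul_apply, piKronecker_apply, Fintype.prod_sum, Finset.prod_mul_distrib]

lemma piKronecker_one [DecidableEq α] : piKronecker (fun _ : ι => (1 : Matrix α α R)) = 1 := by
  ext x y
  simp only [piKronecker_apply, one_apply, Fintype.prod_boole, funext_iff]

lemma conjTranspose_piKronecker [StarRing R] (M : ι → Matrix α β R) :
    (piKronecker M)ᴴ = piKronecker fun i => (M i)ᴴ := by
  ext x y
  simp [conjTranspose_apply, ← star_prod]

lemma piKronecker_mem_unitaryGroup [DecidableEq ι] {S : Type*} [CommRing S] [StarRing S]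
    [Fintype α] [DecidableEq α] {M : ι → Matrix α α S} (hM : ∀ i, M i ∈ unitaryGroup α S) :
    piKronecker M ∈ unitaryGroup (ι → α) S := by
  simp only [mem_unitaryGroup_iff', star_eq_conjTranspose] at hM ⊢
  simp only [conjTranspose_piKronecker, piKronecker_mul, hM, piKronecker_one]

lemma sum_piKronecker [DecidableEq ι] [Fintype γ] (M : ι → γ → Matrix α β R) :
    ∑ c : ι → γ, piKronecker (fun i => M i (c i)) = piKronecker fun i => ∑ c, M i c := by
  ext x y
  simp only [sum_apply, piKronecker_apply, Fintype.prod_sum]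

lemma piKronecker_smul (r : R) (M : ι → Matrix α β R) :
    piKronecker (fun i => r • M i) = r ^ Fintype.card ι • piKronecker M := by
  ext x y
  simp [Finset.prod_mul_distrib]

lemma piKronecker_vecMulVec (u : ι → α → R) (v : ι → β → R) :
    piKronecker (fun i => vecMulVec (u i) (v i)) =
      vecMulVec (fun x => ∏ i, u i (x i)) (fun y => ∏ i, v i (y i)) := by
  ext x y
  simp [vecMulVec_apply, Finset.prod_mul_distrib]

lemma toEuclideanCLM_vecMulVec_star_apply {𝕜 : Type*} [RCLike 𝕜] [DecidableEq ι]
    (x y w : EuclideanSpace 𝕜 ι) :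
    toEuclideanCLM (𝕜 := 𝕜) (vecMulVec x.ofLp (star y.ofLp)) w = inner 𝕜 y w • x := by
  ext i
  simp [vecMulVec_mulVec, EuclideanSpace.inner_eq_star_dotProduct, dotProduct_comm, mul_comm]

end Matrix

lemma norm_half_smul_add_sq {𝕜 E : Type*} [RCLike 𝕜] [NormedAddCommGroup E]
    [InnerProductSpace 𝕜 E] (x y : E) (h : ‖y‖ = ‖x‖) :
    ‖(1 / 2 : 𝕜) • (x + y)‖ ^ 2 = ‖x‖ ^ 2 / 2 + RCLike.re (inner 𝕜 x y) / 2 := by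
  rw [norm_smul, mul_pow, norm_add_sq (𝕜 := 𝕜), h]
  simp
  ring

lemma sum_norm_half_smul_add_sq {𝕜 E ι : Type*} [RCLike 𝕜] [NormedAddCommGroup E]
    [InnerProductSpace 𝕜 E] (s : Finset ι) (x : E) (y : ι → E) (hy : ∀ i ∈ s, ‖y i‖ = ‖x‖)
    (hsum : ∑ i ∈ s, y i = 0) :
    ∑ i ∈ s, ‖(1 / 2 : 𝕜) • (x + y i)‖ ^ 2 = s.card * (‖x‖ ^ 2 / 2) := by
  rw [Finset.sum_congr rfl fun i hi => norm_half_smul_add_sq x (y i) (hy i hi),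
    Finset.sum_add_distrib, ← Finset.sum_div, ← Finset.sum_div, ← map_sum, ← inner_sum, hsum]
  simp [mul_div_assoc]

noncomputable def magicQubit (a : Fin 2) : ℂ :=
  if a = 0 then (Real.cos (Real.pi / 8) : ℂ) else (Real.sin (Real.pi / 8) : ℂ)

lemma ofLp_magicH (n : ℕ) : (magicH n).ofLp = fun x => ∏ i, magicQubit (x i) := rfl

lemma hadMat_mem_unitaryGroup (b : Bool) : hadMat b ∈ unitaryGroup (Fin 2) ℂ := by
  have h : (Real.sqrt 2 : ℂ)⁻¹ * (Real.sqrt 2 : ℂ)⁻¹ = 2⁻¹ := by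
    rw [← mul_inv, ← Complex.ofReal_mul, Real.mul_self_sqrt zero_le_two, Complex.ofReal_ofNat]
  rw [mem_unitaryGroup_iff']
  cases b
  · simp [hadMat]
  · ext i j
    fin_cases i <;> fin_cases j <;> simp [hadMat, mul_apply, Fin.sum_univ_two, h] <;> norm_num

lemma sum_hadMat : ∑ b, hadMat b = (2 : ℂ) • vecMulVec magicQubit (star magicQubit) := by
  have hcc : 2 * Real.cos (Real.pi / 8) ^ 2 = 1 + (Real.sqrt 2)⁻¹ := by
    rw [Real.cos_sq, show 2 * (Real.pi / 8) = Real.pi / 4 by ring, Real.cos_pi_div_four,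
      Real.sqrt_div_self']
    ring
  have hcs : 2 * Real.sin (Real.pi / 8) * Real.cos (Real.pi / 8) = (Real.sqrt 2)⁻¹ := by
    rw [← Real.sin_two_mul, show 2 * (Real.pi / 8) = Real.pi / 4 by ring, Real.sin_pi_div_four,
      Real.sqrt_div_self', one_div]
  have hss : 2 * Real.sin (Real.pi / 8) ^ 2 = 1 - (Real.sqrt 2)⁻¹ := by
    rw [Real.sin_sq]
    linarith
  ext i j
  fin_cases i <;> fin_cases j <;>
    simp [hadMat, magicQubit, vecMulVec_apply, -Real.cos_pi_div_eight, -Real.sin_pi_div_eight,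
      -Complex.ofReal_cos, -Complex.ofReal_sin] <;>
    norm_cast <;> linarith

lemma hadTensor_eq_toEuclideanCLM (n : ℕ) (b : Fin n → Bool)
    (ψ : EuclideanSpace ℂ (Fin n → Fin 2)) :
    hadTensor n b ψ = toEuclideanCLM (𝕜 := ℂ) (piKronecker fun i => hadMat (b i)) ψ := rfl

lemma norm_hadTensor (n : ℕ) (b : Fin n → Bool) (ψ : EuclideanSpace ℂ (Fin n → Fin 2)) :
    ‖hadTensor n b ψ‖ = ‖ψ‖ := by
  have hU := piKronecker_mem_unitaryGroup fun i => hadMat_mem_unitaryGroup (b i)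
  rw [hadTensor_eq_toEuclideanCLM]
  exact ContinuousLinearMap.norm_map_of_mem_unitary (Unitary.map_mem toEuclideanCLM hU) ψ

lemma sum_hadTensor (n : ℕ) (ψ : EuclideanSpace ℂ (Fin n → Fin 2)) :
    ∑ b, hadTensor n b ψ = (2 ^ n * inner ℂ (magicH n) ψ) • magicH n := by
  have hstar : (fun y : Fin n → Fin 2 => ∏ i, star magicQubit (y i)) = star (magicH n).ofLp := by
    ext y
    simp [ofLp_magicH]
  simp_rw [hadTensor_eq_toEuclideanCLM, ← _root_.sum_apply, ← map_sum, sum_piKronecker,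
    sum_hadMat, piKronecker_smul, piKronecker_vecMulVec]
  rw [hstar, ← ofLp_magicH, map_smul, _root_.smul_apply, toEuclideanCLM_vecMulVec_star_apply,
    Fintype.card_fin, smul_smul]

theorem stmt_9_general (n : ℕ) (ε : ℝ) (φ : EuclideanSpace ℂ (Fin n → Fin 2))
    (horth : (inner ℂ (magicH n) φ : ℂ) = 0)
    (hφ : ‖φ‖ ^ 2 = ε) :
    ((1 : ℝ) / 2 ^ n) *
        ∑ b : Fin n → Bool, ‖(1 / 2 : ℂ) • (φ + hadTensor n b φ)‖ ^ 2 ≤ ε / 2 ∧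
      ∃ b : Fin n → Bool, ‖(1 / 2 : ℂ) • (φ + hadTensor n b φ)‖ ^ 2 ≤ ε / 2 := by
  have hsum : ∑ b : Fin n → Bool, ‖(1 / 2 : ℂ) • (φ + hadTensor n b φ)‖ ^ 2 =
      ∑ _b : Fin n → Bool, ε / 2 := by
    rw [sum_norm_half_smul_add_sq _ φ _ (fun b _ => norm_hadTensor n b φ)
      (by rw [sum_hadTensor, horth, mul_zero, zero_smul]), hφ, Finset.sum_const, nsmul_eq_mul]
  refine ⟨?_, ?_⟩
  · rw [hsum, Finset.sum_const, Finset.card_univ, Fintype.card_fun]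
    simp
  · simpa using Finset.exists_le_of_sum_le Finset.univ_nonempty hsum.le

theorem stmt_9 (n : ℕ) (ε : ℝ) (ψ' φ : EuclideanSpace ℂ (Fin n → Fin 2))
    (hψ' : ψ' = magicH n + φ)
    (horth : (inner ℂ (magicH n) φ : ℂ) = 0)
    (hφ : ‖φ‖ ^ 2 = ε) :
    ((1 : ℝ) / 2 ^ n) *
        ∑ b : Fin n → Bool, ‖(1 / 2 : ℂ) • (φ + hadTensor n b φ)‖ ^ 2 ≤ ε / 2 ∧
      ∃ b : Fin n → Bool, ‖(1 / 2 : ℂ) • (φ + hadTensor n b φ)‖ ^ 2 ≤ ε / 2 :=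
  stmt_9_general n ε φ horth hφ
end

section
/- If a linear subspace V of ℂ^{2^n} contains an open neighborhood (within the set of n-fold product states) of some product state, then V = ℂ^{2^n}. -/
/-!
Write `φ = ⊗ wᵢ`. For `θ ≠ 0` the vector `wᵢ` together with the normalized tilts
`wᵢ + θ eₖ` spans `ℂ²`, and for `θ` small all of them are unit vectors close to `wᵢ`. Hence
every tensor product of such vectors is a product state close to `φ` and lies in `V`. By
multilinearity, the tensor products of members of spanning families span all pure tensors,
and the pure tensors include the standard basis of `ℂ^{2^n}`.
-/

/-- An `n`-qubit product state: a tensor product of single-qubit unit vectors. -/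
def IsProductState (n : ℕ) (v : EuclideanSpace ℂ (Fin n → Fin 2)) : Prop :=
  ∃ w : Fin n → EuclideanSpace ℂ (Fin 2),
    (∀ i, ‖w i‖ = 1) ∧ ∀ x : Fin n → Fin 2, v x = ∏ i : Fin n, w i (x i)

open Filter Topology

theorem MultilinearMap.mem_span_range_of_span_eq_top {R ι N : Type*} [CommRing R] [Finite ι]
    {M γ : ι → Type*} [∀ i, AddCommGroup (M i)] [∀ i, Module R (M i)] [AddCommGroup N]
    [Module R N] {g : ⦃i : ι⦄ → γ i → M i} (hg : ∀ i, Submodule.span R (Set.range (@g i)) = ⊤)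
    (f : MultilinearMap R M N) (m : ∀ i, M i) :
    f m ∈ Submodule.span R (Set.range fun j : ∀ i, γ i => f fun i => g (j i)) := by
  set W := Submodule.span R (Set.range fun j : ∀ i, γ i => f fun i => g (j i))
  have : W.mkQ.compMultilinearMap f = 0 :=
    MultilinearMap.ext_of_span_eq_top hg fun j =>
      (Submodule.Quotient.mk_eq_zero W).2 (Submodule.subset_span ⟨j, rfl⟩)
  simpa using DFunLike.congr_fun this m

variable (ι κ : Type*) [Fintype ι]

noncomputable def productVector :
    MultilinearMap ℂ (fun _ : ι => EuclideanSpace ℂ κ) (EuclideanSpace ℂ (ι → κ)) :=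
  (WithLp.linearEquiv 2 ℂ _).symm.toLinearMap.compMultilinearMap
    ((MultilinearMap.piFamily fun _ => MultilinearMap.mkPiAlgebra ℂ ι ℂ).compLinearMap
      fun _ => (WithLp.linearEquiv 2 ℂ _).toLinearMap)

variable {ι κ}

@[simp]
theorem productVector_apply (v : ι → EuclideanSpace ℂ κ) (x : ι → κ) :
    productVector ι κ v x = ∏ i, v i (x i) := rfl

theorem continuous_productVector : Continuous (productVector ι κ) := by
  refine PiLp.continuous_toLp _ _ |>.comp ?_
  refine continuous_pi fun x => ?_
  show Continuous fun v : ι → EuclideanSpace ℂ κ => ∏ i, v i (x i)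
  fun_prop

section Tilt

variable {E β : Type*} [NormedAddCommGroup E] [NormedSpace ℂ E]

noncomputable def tilts (w : E) (b : β → E) (θ : ℂ) (j : Option β) : E :=
  NormedSpace.normalize (w + θ • Option.elim j 0 b)

theorem tendsto_add_smul_nhds_zero (w d : E) :
    Tendsto (fun θ : ℂ => w + θ • d) (𝓝 0) (𝓝 w) := by
  simpa using ((continuous_id.smul continuous_const).const_add w).tendsto (0 : ℂ)

theorem tendsto_tilts {w : E} (hw : w ≠ 0) (b : β → E) (j : Option β) :
    Tendsto (fun θ => tilts w b θ j) (𝓝 0) (𝓝 (NormedSpace.normalize w)) := by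
  have hcont : ContinuousAt (NormedSpace.normalize : E → E) w :=
    (continuous_norm.continuousAt.inv₀ (norm_ne_zero_iff.2 hw)).smul continuousAt_id
  exact hcont.tendsto.comp (tendsto_add_smul_nhds_zero w _)

theorem eventually_norm_tilts_eq_one {w : E} (hw : w ≠ 0) (b : β → E) (j : Option β) :
    ∀ᶠ θ in 𝓝 0, ‖tilts w b θ j‖ = 1 :=
  ((tendsto_add_smul_nhds_zero w _).eventually_ne hw).mono fun _ => NormedSpace.norm_normalize

theorem span_range_tilts (w : E) {b : β → E} (hb : Submodule.span ℂ (Set.range b) = ⊤)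
    {θ : ℂ} (hθ : θ ≠ 0) : Submodule.span ℂ (Set.range (tilts w b θ)) = ⊤ := by
  set W := Submodule.span ℂ (Set.range (tilts w b θ))
  have hmem (j : Option β) : w + θ • Option.elim j 0 b ∈ W := by
    rw [← NormedSpace.norm_smul_normalize (w + θ • Option.elim j 0 b)]
    exact Submodule.smul_of_tower_mem _ _ (Submodule.subset_span ⟨j, rfl⟩)
  rw [eq_top_iff, ← hb, Submodule.span_le]
  rintro _ ⟨k, rfl⟩
  have h := W.sub_mem (hmem (some k)) (hmem none)
  simp only [Option.elim_some, Option.elim_none, smul_zero, add_zero, add_sub_cancel_left] at h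
  simpa [smul_smul, hθ] using W.smul_mem θ⁻¹ h

end Tilt

theorem span_range_productVector [Fintype κ] :
    Submodule.span ℂ (Set.range (productVector ι κ)) = ⊤ := by
  classical
  rw [eq_top_iff, ← (EuclideanSpace.basisFun (ι → κ) ℂ).toBasis.span_eq, Submodule.span_le]
  rintro _ ⟨x, rfl⟩
  refine Submodule.subset_span ⟨fun i => EuclideanSpace.single (x i) 1, ?_⟩
  ext y
  simp [Finset.prod_boole, funext_iff]

theorem Submodule.eq_top_of_eventually_productVector_mem [Fintype κ]
    (V : Submodule ℂ (EuclideanSpace ℂ (ι → κ))) {w : ι → EuclideanSpace ℂ κ}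
    (hw : ∀ i, ‖w i‖ = 1)
    (hV : ∀ᶠ v in 𝓝 w, (∀ i, ‖v i‖ = 1) → productVector ι κ v ∈ V) : V = ⊤ := by
  classical
  set b : κ → EuclideanSpace ℂ κ := fun k => EuclideanSpace.single k 1
  have hb : Submodule.span ℂ (Set.range b) = ⊤ := (EuclideanSpace.basisFun κ ℂ).toBasis.span_eq
  have hw0 (i : ι) : w i ≠ 0 := norm_ne_zero_iff.1 (by simp [hw i])
  have hlim (j : ι → Option κ) :
      Tendsto (fun θ => fun i => tilts (w i) b θ (j i)) (𝓝 0) (𝓝 w) := by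
    refine tendsto_pi_nhds.2 fun i => ?_
    simpa [NormedSpace.normalize_eq_self_of_norm_eq_one (hw i)] using
      tendsto_tilts (hw0 i) b (j i)
  have hev : ∀ᶠ θ in 𝓝[≠] (0 : ℂ),
      (∀ j : ι → Option κ, productVector ι κ (fun i => tilts (w i) b θ (j i)) ∈ V) ∧ θ ≠ 0 := by
    refine (eventually_all.2 fun j => nhdsWithin_le_nhds ?_).and self_mem_nhdsWithin
    exact ((hlim j).eventually hV).and
      (eventually_all.2 fun i => eventually_norm_tilts_eq_one (hw0 i) b (j i)) |>.mono
      fun _ h => h.1 h.2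
  obtain ⟨θ, hmem, hθ⟩ := hev.exists
  rw [eq_top_iff, ← span_range_productVector, Submodule.span_le]
  rintro _ ⟨m, rfl⟩
  exact Submodule.span_le.2 (Set.range_subset_iff.2 hmem)
    ((productVector ι κ).mem_span_range_of_span_eq_top (fun i => span_range_tilts (w i) hb hθ) m)

theorem stmt_17 (n : ℕ) (V : Submodule ℂ (EuclideanSpace ℂ (Fin n → Fin 2)))
    (φ : EuclideanSpace ℂ (Fin n → Fin 2)) (hφ : IsProductState n φ)
    (ε : ℝ) (hε : 0 < ε)
    (hnbhd : ∀ ψ : EuclideanSpace ℂ (Fin n → Fin 2),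
      IsProductState n ψ → ‖ψ - φ‖ < ε → ψ ∈ V) :
    V = ⊤ := by
  obtain ⟨w, hw, hwφ⟩ := hφ
  obtain rfl : φ = productVector (Fin n) (Fin 2) w := PiLp.ext hwφ
  refine V.eq_top_of_eventually_productVector_mem hw ?_
  filter_upwards [continuous_productVector.continuousAt.eventually
    (Metric.ball_mem_nhds _ hε)] with v hv hv1
  exact hnbhd _ ⟨v, hv1, fun _ => rfl⟩ (by rwa [← dist_eq_norm])
end

section
/- Let S be a finite set of vectors in ℂ^{2^n} whose union of all spans of (2^n − 1)-element subsets is denoted U. Then the set of product states not in U (equivalently: product states with S-rank exactly 2^n) is open in the set of product states, and nonempty implies dense; in fact it is open and dense in the set of product states. -/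
open Filter Topology

theorem ContinuousMultilinearMap.apply_mem_of_eventually_mem {ι : Type*} [Fintype ι]
    {E : ι → Type*} [∀ i, NormedAddCommGroup (E i)] [∀ i, NormedSpace ℂ (E i)]
    {F : Type*} [NormedAddCommGroup F] [NormedSpace ℂ F]
    (f : ContinuousMultilinearMap ℂ E F) (W : Submodule ℂ F) [IsClosed (W : Set F)]
    {w : ∀ i, E i} (hw : ∀ᶠ z in 𝓝 w, f z ∈ W) (z : ∀ i, E i) : f z ∈ W := by
  have hzero : (fun z => W.mkQL (f z)) =ᶠ[𝓝 w] 0 := hw.mono fun z hz => by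
    simpa [Submodule.Quotient.mk_eq_zero] using hz
  have := (W.mkQL.compContinuousMultilinearMap f).analyticOnNhd
    |>.eqOn_zero_of_preconnected_of_eventuallyEq_zero isPreconnected_univ (Set.mem_univ w) hzero
      (Set.mem_univ z)
  simpa [Submodule.Quotient.mk_eq_zero] using this

theorem continuousAt_normalize {ι : Type*} {E : Type*} [NormedAddCommGroup E] [NormedSpace ℂ E]
    {w : ι → E} (hw : ∀ i, w i ≠ 0) :
    ContinuousAt (fun (z : ι → E) i => (‖z i‖ : ℂ)⁻¹ • z i) w := by
  refine continuousAt_pi.2 fun i => ?_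
  have hnorm : Continuous fun z : ι → E => (‖z i‖ : ℂ) :=
    Complex.continuous_ofReal.comp (continuous_norm.comp (continuous_apply i))
  exact (hnorm.continuousAt.inv₀ (by simpa using hw i)).smul (continuous_apply i).continuousAt

noncomputable def productMap (ι κ : Type*) [Fintype ι] : ContinuousMultilinearMap ℂ
    (fun _ : ι => EuclideanSpace ℂ κ) (EuclideanSpace ℂ (ι → κ)) :=
  (EuclideanSpace.equiv (ι → κ) ℂ).symm.toContinuousLinearMap.compContinuousMultilinearMap
    (ContinuousMultilinearMap.pi fun x =>
      (ContinuousMultilinearMap.mkPiAlgebra ℂ ι ℂ).compContinuousLinearMap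
        fun i => EuclideanSpace.proj (x i))

namespace productMap

variable {ι κ : Type*} [Fintype ι]

theorem apply (z : ι → EuclideanSpace ℂ κ) (x : ι → κ) :
    productMap ι κ z x = ∏ i, z i (x i) := by
  simp [productMap]

theorem single [DecidableEq κ] [DecidableEq (ι → κ)] (x : ι → κ) :
    productMap ι κ (fun i => EuclideanSpace.single (x i) 1) = EuclideanSpace.single x 1 := by
  ext y
  simp [apply, PiLp.single_apply, Finset.prod_ite_zero, funext_iff]

theorem span_range [Fintype κ] : Submodule.span ℂ (Set.range (productMap ι κ)) = ⊤ := by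
  classical
  refine eq_top_mono (Submodule.span_mono ?_) (EuclideanSpace.basisFun _ ℂ).toBasis.span_eq
  rintro _ ⟨x, rfl⟩
  exact ⟨_, by simpa using single x⟩

theorem eq_prod_norm_smul [Fintype κ] (z : ι → EuclideanSpace ℂ κ) (hz : ∀ i, z i ≠ 0) :
    productMap ι κ z = (∏ i, (‖z i‖ : ℂ)) • productMap ι κ fun i => (‖z i‖ : ℂ)⁻¹ • z i := by
  rw [ContinuousMultilinearMap.map_smul_univ, smul_smul, ← Finset.prod_mul_distrib]
  simp [hz]

end productMap

section ProductStates

variable {n : ℕ}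

theorem isProductState_iff {v : EuclideanSpace ℂ (Fin n → Fin 2)} :
    IsProductState n v ↔ ∃ w, (∀ i, ‖w i‖ = 1) ∧ productMap (Fin n) (Fin 2) w = v := by
  simp only [IsProductState, PiLp.ext_iff, productMap.apply, eq_comm]

theorem isProductState_productMap_normalize (z : Fin n → EuclideanSpace ℂ (Fin 2))
    (hz : ∀ i, z i ≠ 0) :
    IsProductState n (productMap (Fin n) (Fin 2) fun i => (‖z i‖ : ℂ)⁻¹ • z i) :=
  isProductState_iff.2 ⟨_, fun i => by simp [norm_smul, hz], rfl⟩

theorem Submodule.eq_top_of_eventually_productState_mem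
    (W : Submodule ℂ (EuclideanSpace ℂ (Fin n → Fin 2))) {p : {v // IsProductState n v}}
    (hp : ∀ᶠ q : {v // IsProductState n v} in 𝓝 p, (q : EuclideanSpace ℂ (Fin n → Fin 2)) ∈ W) :
    W = ⊤ := by
  obtain ⟨w, hw, hwp⟩ := isProductState_iff.1 p.2
  have hw0 : ∀ i, w i ≠ 0 := fun i => norm_ne_zero_iff.1 (by simp [hw i])
  have hstates :
      ∀ᶠ v in 𝓝 (p : EuclideanSpace ℂ (Fin n → Fin 2)), IsProductState n v → v ∈ W := by
    rw [nhds_induced, Filter.eventually_comap] at hp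
    exact hp.mono fun v hv hpv => hv ⟨v, hpv⟩ rfl
  have hnormalize : ContinuousAt
      (fun z => productMap (Fin n) (Fin 2) fun i => (‖z i‖ : ℂ)⁻¹ • z i) w :=
    (productMap (Fin n) (Fin 2)).cont.continuousAt.comp (continuousAt_normalize hw0)
  have hnormalize_w : (productMap (Fin n) (Fin 2) fun i => (‖w i‖ : ℂ)⁻¹ • w i) = p := by
    simp [hw, hwp]
  have hne : ∀ᶠ z in 𝓝 w, ∀ i, z i ≠ 0 :=
    eventually_all.2 fun i => (continuous_apply i).continuousAt.eventually_ne (hw0 i)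
  have hmem : ∀ᶠ z in 𝓝 w, productMap (Fin n) (Fin 2) z ∈ W := by
    filter_upwards [hne, hnormalize.eventually (hnormalize_w ▸ hstates)] with z hz hzW
    rw [productMap.eq_prod_norm_smul z hz]
    exact W.smul_mem _ (hzW (isProductState_productMap_normalize z hz))
  have hW_closed : IsClosed (W : Set (EuclideanSpace ℂ (Fin n → Fin 2))) :=
    W.closed_of_finiteDimensional
  rw [eq_top_iff, ← productMap.span_range, Submodule.span_le]
  rintro _ ⟨z, rfl⟩
  exact (productMap (Fin n) (Fin 2)).apply_mem_of_eventually_mem W hmem z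

theorem dense_setOf_productState_notMem {W : Submodule ℂ (EuclideanSpace ℂ (Fin n → Fin 2))}
    (hW : W ≠ ⊤) :
    Dense {p : {v // IsProductState n v} | (p : EuclideanSpace ℂ (Fin n → Fin 2)) ∉ W} := by
  change Dense {p : {v // IsProductState n v} | (p : EuclideanSpace ℂ (Fin n → Fin 2)) ∈ W}ᶜ
  rw [← interior_eq_empty_iff_dense_compl, Set.eq_empty_iff_forall_notMem]
  intro p hp
  exact hW (W.eq_top_of_eventually_productState_mem (mem_interior_iff_mem_nhds.1 hp))

end ProductStates

theorem stmt_18 (n : ℕ) (S : Finset (EuclideanSpace ℂ (Fin n → Fin 2)))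
    (U : Set (EuclideanSpace ℂ (Fin n → Fin 2)))
    (hU : U = {v | ∃ t : Finset (EuclideanSpace ℂ (Fin n → Fin 2)),
      t ⊆ S ∧ t.card = 2 ^ n - 1 ∧ v ∈ Submodule.span ℂ (t : Set _)}) :
    IsOpen {p : {v // IsProductState n v} | (p : EuclideanSpace ℂ (Fin n → Fin 2)) ∉ U} ∧
      Dense {p : {v // IsProductState n v} | (p : EuclideanSpace ℂ (Fin n → Fin 2)) ∉ U} := by
  let V (t : Finset (EuclideanSpace ℂ (Fin n → Fin 2))) : Set {v // IsProductState n v} :=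
    {p | (p : EuclideanSpace ℂ (Fin n → Fin 2)) ∉ Submodule.span ℂ (t : Set _)}
  let T := S.powersetCard (2 ^ n - 1)
  have hUV : {p : {v // IsProductState n v} | (p : EuclideanSpace ℂ (Fin n → Fin 2)) ∉ U} =
      ⋂₀ (V '' T) := by
    ext p
    simp [hU, V, T, Finset.mem_powersetCard, and_imp]
  have hV_open : ∀ t, IsOpen (V t) := fun t =>
    (Submodule.span ℂ (t : Set (EuclideanSpace ℂ (Fin n → Fin 2)))).closed_of_finiteDimensional
      |>.isOpen_compl.preimage continuous_subtype_val
  have hV_dense : ∀ t ∈ T, Dense (V t) := by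
    intro t ht
    refine dense_setOf_productState_notMem (ne_of_lt (span_lt_top_of_card_lt_finrank ?_))
    simp [(Finset.mem_powersetCard.1 ht).2]
  have hT : (V '' T).Finite := T.finite_toSet.image V
  rw [hUV]
  exact ⟨hT.isOpen_sInter (Set.forall_mem_image.2 fun t _ => hV_open t),
    hT.dense_sInter (Set.forall_mem_image.2 fun t _ => hV_open t)
      (Set.forall_mem_image.2 hV_dense)⟩
end
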